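/- For finitely supported real sequences b = {b_I}, β = {β_J}, independent uniform ±1 random signs σ = {σ_J}, and any φ ∈ L²(ℝ), E ‖P^{0,1}_b (P^{σ,1,0}_β φ)‖_2² = Σ_{J∈𝒟} ⟨φ, h_J⟩² β_J² Σ_{I∈𝒟, I∩J≠∅} b_I² ⟨h¹_I, h¹_J⟩². -/

import Mathlib

open MeasureTheory ProbabilityTheory Real Filter
open scoped ENNReal

attribute [local instance] Classical.propDecidable

noncomputable section

namespace RandomParaproducts

/-- Dyadic intervals: `(n, k)` represents `[k·2ⁿ, (k+1)·2ⁿ)`. -/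
abbrev D : Type := ℤ × ℤ

/-- The length `2ⁿ` of the dyadic interval `(n, k)`. -/
def len (I : D) : ℝ := (2 : ℝ) ^ I.1

/-- The dyadic interval `[k·2ⁿ, (k+1)·2ⁿ)` as a subset of `ℝ`. -/
def ival (I : D) : Set ℝ := Set.Ico ((I.2 : ℝ) * (2 : ℝ) ^ I.1) (((I.2 : ℝ) + 1) * (2 : ℝ) ^ I.1)

/-- The left half of a dyadic interval. -/
def lc (I : D) : D := (I.1 - 1, 2 * I.2)

/-- The right half of a dyadic interval. -/
def rc (I : D) : D := (I.1 - 1, 2 * I.2 + 1)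

/-- The `L²`-normalized Haar function `h_I = h⁰_I`. -/
def haar (I : D) : ℝ → ℝ := fun x =>
  (Real.sqrt (len I))⁻¹ *
    ((ival (rc I)).indicator (fun _ => (1 : ℝ)) x - (ival (lc I)).indicator (fun _ => (1 : ℝ)) x)

/-- The function `h¹_I = |h_I| = |I|^{-1/2} 1_I`. -/
def haar1 (I : D) : ℝ → ℝ := fun x =>
  (Real.sqrt (len I))⁻¹ * (ival I).indicator (fun _ => (1 : ℝ)) x

/-- `h^ε_I`, where `false` codes the exponent `0` and `true` codes the exponent `1`. -/
def hfun : Bool → D → ℝ → ℝ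
  | false => haar
  | true => haar1

/-- The inner product `⟨f, g⟩ = ∫ f g` on `L²(ℝ)`. -/
def ip (f g : ℝ → ℝ) : ℝ := ∫ x, f x * g x

/-- The paraproduct `P^{ε,δ}_b f = ∑_I b_I ⟨f, h^δ_I⟩ h^ε_I` with finitely supported
numerical symbol `b`. -/
def P (e d : Bool) (b : D →₀ ℝ) (f : ℝ → ℝ) : ℝ → ℝ := fun x =>
  ∑ I ∈ b.support, b I * ip f (hfun d I) * hfun e I x

/-- The signed paraproduct `P^{σ,ε,δ}_b f = ∑_I σ_I b_I ⟨f, h^δ_I⟩ h^ε_I`. -/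
def Psig (σ : D → ℝ) (e d : Bool) (b : D →₀ ℝ) (f : ℝ → ℝ) : ℝ → ℝ := fun x =>
  ∑ I ∈ b.support, σ I * (b I * ip f (hfun d I) * hfun e I x)

/-- The square of the `L²(ℝ)` norm, `‖g‖₂² = ∫ g²`. -/
def l2normSq (g : ℝ → ℝ) : ℝ := ∫ x, (g x) ^ 2

/-- The Carleson norm of a sequence `a` whose nonzero entries lie in the finite set `s`:
`sup_J (|J|⁻¹ ∑_{I ⊆ J} a_I² |I|)^{1/2}`. -/
def carlOn (s : Finset D) (a : D → ℝ) : ℝ :=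
  ⨆ J : D, Real.sqrt ((len J)⁻¹ *
    ∑ I ∈ s.filter (fun I => ival I ⊆ ival J), (a I) ^ 2 * len I)

/-- `μ` is the law of independent uniformly distributed random signs `{σ_I : I ∈ 𝒟}`. -/
def IsSignMeasure (μ : Measure (D → ℝ)) : Prop :=
  IsProbabilityMeasure μ ∧
    iIndepFun (m := fun _ : D => (inferInstance : MeasurableSpace ℝ)) (fun I σ => σ I) μ ∧
    ∀ I : D, μ.map (fun σ => σ I) =
      (2⁻¹ : ℝ≥0∞) • (Measure.dirac (1 : ℝ) + Measure.dirac (-1 : ℝ))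

/-- `f` is a unit vector of `L²(ℝ)`. -/
def UnitL2 (f : ℝ → ℝ) : Prop := MemLp f 2 volume ∧ eLpNorm f 2 volume = 1

/-- The operator norm on `L²(ℝ)` of a map defined on functions. -/
def opNorm (T : (ℝ → ℝ) → ℝ → ℝ) : ℝ :=
  ⨆ f : {f : ℝ → ℝ // UnitL2 f}, Real.sqrt (l2normSq (T f.1))

/-- The averaged operator norm `sup_{‖f‖₂ = 1} (𝔼 ‖T_σ f‖₂²)^{1/2}`. -/
def avgOpNorm (μ : Measure (D → ℝ)) (T : (D → ℝ) → (ℝ → ℝ) → ℝ → ℝ) : ℝ :=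
  ⨆ f : {f : ℝ → ℝ // UnitL2 f}, Real.sqrt (∫ σ, l2normSq (T σ f.1) ∂μ)

/-- `b` is the finite linear combination of Haar functions with coefficients `c`. -/
def FinHaar (b : ℝ → ℝ) (c : D →₀ ℝ) : Prop :=
  b = fun x => ∑ I ∈ c.support, c I * haar I x

/-- The paraproduct `P^{ε,γ}_{b,α} f = ∑_{I} (⟨b, h^α_I⟩/|I|^{1/2}) ⟨f, h^γ_I⟩ h^ε_I` with
function symbol `b`, the sum extended over a finite set `s` containing all the
nonvanishing terms. -/
def Pb (s : Finset D) (e g a : Bool) (b : ℝ → ℝ) (f : ℝ → ℝ) : ℝ → ℝ := fun x =>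
  ∑ I ∈ s, (ip b (hfun a I) / Real.sqrt (len I)) * ip f (hfun g I) * hfun e I x

lemma measurableSet_ival (I : D) : MeasurableSet (ival I) := measurableSet_Ico

lemma volume_ival_ne_top (I : D) : volume (ival I) ≠ ⊤ := by
  simp only [ival, Real.volume_Ico]; exact ENNReal.ofReal_ne_top

lemma memℒp_haar (I : D) : MemLp (haar I) 2 volume := by
  have h1 : MemLp ((ival (rc I)).indicator (fun _ => (1 : ℝ))) 2 volume :=
    memLp_indicator_const 2 (measurableSet_ival _) 1 (Or.inr (volume_ival_ne_top _))
  have h2 : MemLp ((ival (lc I)).indicator (fun _ => (1 : ℝ))) 2 volume :=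
    memLp_indicator_const 2 (measurableSet_ival _) 1 (Or.inr (volume_ival_ne_top _))
  exact ((h1.sub h2).const_mul ((Real.sqrt (len I))⁻¹))

/-- The Haar function `h_I` as an element of `L²(ℝ)`. -/
def haarLp (I : D) : Lp ℝ 2 (volume : Measure ℝ) := (memℒp_haar I).toLp (haar I)

/-- The random Haar multiplier `T_σ f = ∑_{I ∈ 𝒟} σ_I ⟨f, h_I⟩ h_I`, as an element of
`L²(ℝ)`; the (infinite) sum converges unconditionally in `L²`. -/
def Tfull (σ : D → ℝ) (g : ℝ → ℝ) : Lp ℝ 2 (volume : Measure ℝ) :=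
  ∑' I : D, (σ I * ip g (haar I)) • haarLp I

/-- The composition `M_b T_σ M_β` applied to `f`, as a function. -/
def MbTM (σ : D → ℝ) (b β f : ℝ → ℝ) : ℝ → ℝ := fun x =>
  b x * (Tfull σ fun y => β y * f y) x


/-! The outer paraproduct `P^{0,1}_b` is a finite Haar series with coefficients
`b_I ⟨g, h¹_I⟩`, so by orthonormality of the Haar system its squared norm is
`∑_I b_I² ⟨g, h¹_I⟩²`. For `g = P^{σ,1,0}_β φ` each `⟨g, h¹_I⟩` is the Rademacher sum
`∑_J σ_J β_J ⟨φ, h_J⟩ ⟨h¹_J, h¹_I⟩`, and independent symmetric signs are orthonormal in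
`L²(μ)`, so its expected square is the sum of the squared coefficients; the terms with
`I ∩ J = ∅` vanish. Orthonormality of the Haar functions comes from dyadic nesting:
`x ∈ [k 2ⁿ, (k+1) 2ⁿ)` iff `⌊x / 2ⁿ⌋ = k`, and `⌊x / 2ⁿ⁺ᴺ⌋ = ⌊x / 2ⁿ⌋ / 2ᴺ`, so a Haar function
is constant on every strictly finer dyadic interval. -/

lemma mem_ival_iff {I : D} {x : ℝ} : x ∈ ival I ↔ ⌊x / 2 ^ I.1⌋ = I.2 := by
  have h : (0 : ℝ) < 2 ^ I.1 := by positivity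
  rw [Int.floor_eq_iff, le_div_iff₀ h, div_lt_iff₀ h]
  rfl

lemma floor_div_two_zpow_add (x : ℝ) (n : ℤ) (N : ℕ) :
    ⌊x / 2 ^ (n + N)⌋ = ⌊x / 2 ^ n⌋ / 2 ^ N := by
  have h := Int.floor_div_natCast (x / 2 ^ n) (2 ^ N)
  push_cast at h
  rw [zpow_add₀ two_ne_zero, zpow_natCast, ← div_div, h]

/-- Dyadic intervals are nested or disjoint. -/
lemma mem_ival_iff_of_mem_ival {I J : D} (hIJ : I.1 ≤ J.1) {x y : ℝ}
    (hx : x ∈ ival I) (hy : y ∈ ival I) : x ∈ ival J ↔ y ∈ ival J := by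
  obtain ⟨N, hN⟩ := Int.le.dest hIJ
  rw [mem_ival_iff] at hx hy
  rw [mem_ival_iff, mem_ival_iff, ← hN, floor_div_two_zpow_add, floor_div_two_zpow_add, hx, hy]

lemma disjoint_ival_of_fst_eq {I J : D} (h₁ : I.1 = J.1) (hne : I ≠ J) :
    Disjoint (ival I) (ival J) :=
  Set.disjoint_left.2 fun x hI hJ => hne <| Prod.ext h₁ <| by
    rw [mem_ival_iff] at hI hJ
    rw [← hI, ← hJ, h₁]

lemma ival_subset_ival_of_parent {I K : D} (h₁ : K.1 + 1 = I.1) (h₂ : K.2 / 2 = I.2) :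
    ival K ⊆ ival I := by
  intro x hx
  rw [mem_ival_iff] at hx ⊢
  have h := floor_div_two_zpow_add x K.1 1
  rw [Nat.cast_one, h₁] at h
  rw [h, hx, pow_one, h₂]

lemma ival_lc_subset (I : D) : ival (lc I) ⊆ ival I :=
  ival_subset_ival_of_parent (by simp [lc]) (by simp [lc])

lemma ival_rc_subset (I : D) : ival (rc I) ⊆ ival I :=
  ival_subset_ival_of_parent (by simp [rc]) (by simp only [rc]; omega)

lemma len_pos (I : D) : 0 < len I := zpow_pos two_pos I.1

lemma left_mem_ival (I : D) : (I.2 : ℝ) * 2 ^ I.1 ∈ ival I :=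
  ⟨le_rfl, by linarith [show (0 : ℝ) < 2 ^ I.1 from len_pos I]⟩

lemma haar_eq_of_mem_ival {I J : D} (hIJ : I.1 < J.1) {x y : ℝ}
    (hx : x ∈ ival I) (hy : y ∈ ival I) : haar J x = haar J y := by
  have hl : I.1 ≤ (lc J).1 := by simp only [lc]; omega
  have hr : I.1 ≤ (rc J).1 := by simp only [rc]; omega
  simp only [haar, Set.indicator_apply, mem_ival_iff_of_mem_ival hl hx hy,
    mem_ival_iff_of_mem_ival hr hx hy]

lemma haar_eq_zero_of_notMem {I : D} {x : ℝ} (hx : x ∉ ival I) : haar I x = 0 := by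
  have hl : x ∉ ival (lc I) := fun h => hx (ival_lc_subset I h)
  have hr : x ∉ ival (rc I) := fun h => hx (ival_rc_subset I h)
  simp [haar, Set.indicator_of_notMem hl, Set.indicator_of_notMem hr]

lemma haar1_eq_zero_of_notMem {I : D} {x : ℝ} (hx : x ∉ ival I) : haar1 I x = 0 := by
  simp [haar1, Set.indicator_of_notMem hx]

lemma memLp_haar1 (I : D) : MemLp (haar1 I) 2 volume :=
  (memLp_indicator_const 2 (measurableSet_ival I) (1 : ℝ)
    (Or.inr (volume_ival_ne_top I))).const_mul _

lemma integral_indicator_ival (I : D) : ∫ x, (ival I).indicator (fun _ => (1 : ℝ)) x = len I := by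
  have h : ((I.2 : ℝ) + 1) * 2 ^ I.1 - I.2 * 2 ^ I.1 = len I := by unfold len; ring
  rw [integral_indicator_const _ (measurableSet_ival I), smul_eq_mul, mul_one, measureReal_def,
    ival, Real.volume_Ico, h, ENNReal.toReal_ofReal (len_pos I).le]

lemma integrable_indicator_ival (I : D) :
    Integrable ((ival I).indicator (fun _ => (1 : ℝ))) volume :=
  (integrable_indicator_iff (measurableSet_ival I)).2
    (integrableOn_const (volume_ival_ne_top I))

lemma integral_haar (I : D) : ∫ x, haar I x = 0 := by
  unfold haar
  rw [integral_const_mul, integral_sub (integrable_indicator_ival _)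
    (integrable_indicator_ival _), integral_indicator_ival, integral_indicator_ival]
  simp [len, lc, rc]

lemma haar_mul_self (I : D) (x : ℝ) :
    haar I x * haar I x = (len I)⁻¹ * ((ival (rc I)).indicator (fun _ => (1 : ℝ)) x +
      (ival (lc I)).indicator (fun _ => (1 : ℝ)) x) := by
  have hdisj : Disjoint (ival (rc I)) (ival (lc I)) :=
    disjoint_ival_of_fst_eq rfl (by simp [lc, rc])
  have hsqrt : (Real.sqrt (len I))⁻¹ * (Real.sqrt (len I))⁻¹ = (len I)⁻¹ := by
    rw [← mul_inv, Real.mul_self_sqrt (len_pos I).le]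
  unfold haar
  by_cases hr : x ∈ ival (rc I)
  · have hl : x ∉ ival (lc I) := Set.disjoint_left.1 hdisj hr
    simp only [Set.indicator_of_mem hr, Set.indicator_of_notMem hl]
    linear_combination hsqrt
  · by_cases hl : x ∈ ival (lc I)
    · simp only [Set.indicator_of_mem hl, Set.indicator_of_notMem hr]
      linear_combination hsqrt
    · simp [Set.indicator_of_notMem hl, Set.indicator_of_notMem hr]

lemma ip_haar_self (I : D) : ip (haar I) (haar I) = 1 := by
  unfold ip
  simp_rw [haar_mul_self]
  rw [integral_const_mul, integral_add (integrable_indicator_ival _)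
    (integrable_indicator_ival _), integral_indicator_ival, integral_indicator_ival]
  simp only [len, lc, rc]
  rw [zpow_sub_one₀ two_ne_zero]
  field_simp
  ring

lemma ip_comm (f g : ℝ → ℝ) : ip f g = ip g f := by
  simp only [ip, mul_comm]

lemma ip_eq_zero_of_disjoint {f g : ℝ → ℝ} {s t : Set ℝ} (hst : Disjoint s t)
    (hf : ∀ x ∉ s, f x = 0) (hg : ∀ x ∉ t, g x = 0) : ip f g = 0 := by
  have h : ∀ x, f x * g x = 0 := fun x => by
    by_cases hx : x ∈ s
    · rw [hg x (Set.disjoint_left.1 hst hx), mul_zero]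
    · rw [hf x hx, zero_mul]
  simp [ip, h]

lemma ip_haar_of_fst_lt {I J : D} (hIJ : I.1 < J.1) : ip (haar I) (haar J) = 0 := by
  -- `haar J` is constant on `ival I`, where `haar I` lives and has mean zero.
  set c := haar J ((I.2 : ℝ) * 2 ^ I.1)
  have h : ∀ x, haar I x * haar J x = c * haar I x := fun x => by
    by_cases hx : x ∈ ival I
    · rw [haar_eq_of_mem_ival hIJ hx (left_mem_ival I), mul_comm]
    · simp [haar_eq_zero_of_notMem hx]
  simp only [ip, h]
  rw [integral_const_mul, integral_haar, mul_zero]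

lemma ip_haar_of_ne {I J : D} (hne : I ≠ J) : ip (haar I) (haar J) = 0 := by
  rcases lt_trichotomy I.1 J.1 with hlt | heq | hgt
  · exact ip_haar_of_fst_lt hlt
  · exact ip_eq_zero_of_disjoint (disjoint_ival_of_fst_eq heq hne)
      (fun _ => haar_eq_zero_of_notMem) (fun _ => haar_eq_zero_of_notMem)
  · rw [ip_comm]
    exact ip_haar_of_fst_lt hgt

lemma ip_haar1_of_not_nonempty {I J : D} (h : ¬(ival I ∩ ival J).Nonempty) :
    ip (haar1 I) (haar1 J) = 0 :=
  ip_eq_zero_of_disjoint (Set.not_nonempty_iff_eq_empty.1 h |> Set.disjoint_iff_inter_eq_empty.2)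
    (fun _ => haar1_eq_zero_of_notMem) (fun _ => haar1_eq_zero_of_notMem)

lemma sq_finset_sum_mul {α ι : Type*} (f : ι → α → ℝ) (s : Finset ι) (c : ι → ℝ) (x : α) :
    (∑ i ∈ s, c i * f i x) ^ 2 = ∑ i ∈ s, ∑ j ∈ s, c i * c j * (f i x * f j x) := by
  rw [sq, Finset.sum_mul_sum]
  exact Finset.sum_congr rfl fun i _ => Finset.sum_congr rfl fun j _ => by ring

section Orthonormal

variable {α ι : Type*} [MeasurableSpace α] {ν : Measure α} {f : ι → α → ℝ}

lemma integrable_sq_finset_sum (hint : ∀ i j, Integrable (fun x => f i x * f j x) ν)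
    (s : Finset ι) (c : ι → ℝ) : Integrable (fun x => (∑ i ∈ s, c i * f i x) ^ 2) ν := by
  simp_rw [sq_finset_sum_mul]
  exact integrable_finsetSum _ fun i _ => integrable_finsetSum _ fun j _ =>
    (hint i j).const_mul _

lemma integral_sq_finset_sum (hint : ∀ i j, Integrable (fun x => f i x * f j x) ν)
    (hnorm : ∀ i, ∫ x, f i x * f i x ∂ν = 1)
    (horth : Pairwise fun i j => ∫ x, f i x * f j x ∂ν = 0) (s : Finset ι) (c : ι → ℝ) :
    ∫ x, (∑ i ∈ s, c i * f i x) ^ 2 ∂ν = ∑ i ∈ s, c i ^ 2 := by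
  simp_rw [sq_finset_sum_mul]
  rw [integral_finsetSum _ fun i _ => integrable_finsetSum _ fun j _ => (hint i j).const_mul _]
  refine Finset.sum_congr rfl fun i hi => ?_
  rw [integral_finsetSum _ fun j _ => (hint i j).const_mul _,
    Finset.sum_eq_single_of_mem i hi fun j _ hji => by rw [integral_const_mul, horth hji.symm,
      mul_zero],
    integral_const_mul, hnorm, mul_one, sq]

end Orthonormal

lemma l2normSq_finset_sum_haar (s : Finset D) (a : D → ℝ) :
    l2normSq (fun x => ∑ I ∈ s, a I * haar I x) = ∑ I ∈ s, a I ^ 2 :=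
  integral_sq_finset_sum (fun I J => (memℒp_haar I).integrable_mul (memℒp_haar J))
    ip_haar_self (fun _ _ => ip_haar_of_ne) s a

lemma ip_finset_sum_left {ι : Type*} (s : Finset ι) (c : ι → ℝ) {f : ι → ℝ → ℝ} {g : ℝ → ℝ}
    (hf : ∀ i ∈ s, MemLp (f i) 2 volume) (hg : MemLp g 2 volume) :
    ip (fun x => ∑ i ∈ s, c i * f i x) g = ∑ i ∈ s, c i * ip (f i) g := by
  have hint : ∀ i ∈ s, Integrable (fun x => c i * (f i x * g x)) volume :=
    fun i hi => ((hf i hi).integrable_mul hg).const_mul (c i)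
  simp only [ip, Finset.sum_mul, mul_assoc]
  rw [integral_finsetSum _ hint]
  simp_rw [integral_const_mul]

namespace IsSignMeasure

variable {μ : Measure (D → ℝ)}

lemma ae_eq_one_or_eq_neg_one (hμ : IsSignMeasure μ) (J : D) :
    ∀ᵐ σ ∂μ, σ J = 1 ∨ σ J = -1 := by
  have hs : MeasurableSet ({1, -1} : Set ℝ)ᶜ := (Set.toFinite _).measurableSet.compl
  have h0 : μ.map (fun σ => σ J) ({1, -1} : Set ℝ)ᶜ = 0 := by
    simp [hμ.2.2 J, Measure.dirac_apply' _ hs]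
  rw [Measure.map_apply (measurable_pi_apply J) hs] at h0
  exact measure_eq_zero_iff_ae_notMem.1 h0 |>.mono fun σ hσ => by
    simpa [or_iff_not_imp_left] using hσ

lemma integral_eval (hμ : IsSignMeasure μ) (J : D) : ∫ σ, σ J ∂μ = 0 := by
  have hmap := integral_map (μ := μ) (f := fun x : ℝ => x) (measurable_pi_apply J).aemeasurable
    aestronglyMeasurable_id
  have hdirac (a : ℝ) : Integrable (fun x : ℝ => x) (Measure.dirac a) :=
    integrable_dirac (by simp)
  rw [← hmap, hμ.2.2 J, integral_smul_measure, integral_add_measure (hdirac 1) (hdirac (-1)),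
    integral_dirac, integral_dirac]
  norm_num

lemma integrable_eval_mul_eval (hμ : IsSignMeasure μ) (J J' : D) :
    Integrable (fun σ => σ J * σ J') μ := by
  have := hμ.1
  refine (integrable_const (1 : ℝ)).mono'
    ((measurable_pi_apply J).mul (measurable_pi_apply J')).aestronglyMeasurable ?_
  filter_upwards [hμ.ae_eq_one_or_eq_neg_one J, hμ.ae_eq_one_or_eq_neg_one J'] with σ h h'
  rcases h with h | h <;> rcases h' with h' | h' <;> simp [h, h']

lemma integral_eval_mul_self (hμ : IsSignMeasure μ) (J : D) : ∫ σ, σ J * σ J ∂μ = 1 := by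
  have := hμ.1
  rw [integral_congr_ae ((hμ.ae_eq_one_or_eq_neg_one J).mono fun σ h =>
    show σ J * σ J = 1 by rcases h with h | h <;> simp [h])]
  simp

lemma integral_eval_mul_eval (hμ : IsSignMeasure μ) {J J' : D} (hne : J ≠ J') :
    ∫ σ, σ J * σ J' ∂μ = 0 := by
  rw [(hμ.2.1.indepFun hne).integral_fun_mul_eq_mul_integral
    (measurable_pi_apply J).aestronglyMeasurable (measurable_pi_apply J').aestronglyMeasurable,
    hμ.integral_eval, zero_mul]

lemma integral_sq_finset_sum (hμ : IsSignMeasure μ) (s : Finset D) (c : D → ℝ) :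
    ∫ σ, (∑ J ∈ s, c J * σ J) ^ 2 ∂μ = ∑ J ∈ s, c J ^ 2 :=
  RandomParaproducts.integral_sq_finset_sum (f := fun J (σ : D → ℝ) => σ J)
    hμ.integrable_eval_mul_eval hμ.integral_eval_mul_self (fun _ _ => hμ.integral_eval_mul_eval) s c

end IsSignMeasure

lemma l2normSq_P_false (d : Bool) (b : D →₀ ℝ) (f : ℝ → ℝ) :
    l2normSq (P false d b f) = ∑ I ∈ b.support, (b I * ip f (hfun d I)) ^ 2 :=
  l2normSq_finset_sum_haar b.support fun I => b I * ip f (hfun d I)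

lemma ip_Psig_true (σ : D → ℝ) (d : Bool) (β : D →₀ ℝ) (f : ℝ → ℝ) {g : ℝ → ℝ}
    (hg : MemLp g 2 volume) :
    ip (Psig σ true d β f) g =
      ∑ J ∈ β.support, β J * ip f (hfun d J) * ip (haar1 J) g * σ J := by
  have h : Psig σ true d β f = fun x => ∑ J ∈ β.support, σ J * β J * ip f (hfun d J) * haar1 J x :=
    funext fun x => Finset.sum_congr rfl fun J _ => by simp only [hfun]; ring
  rw [h, ip_finset_sum_left _ _ (fun J _ => memLp_haar1 J) hg]
  exact Finset.sum_congr rfl fun J _ => by ring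

theorem statement13_general (b β : D →₀ ℝ) (μ : Measure (D → ℝ)) (hμ : IsSignMeasure μ)
    (φ : ℝ → ℝ) :
    ∫ σ, l2normSq (P false true b (Psig σ true false β φ)) ∂μ =
      ∑ J ∈ β.support, (ip φ (haar J)) ^ 2 * (β J) ^ 2 *
        ∑ I ∈ b.support.filter (fun I => (ival I ∩ ival J).Nonempty),
          (b I) ^ 2 * (ip (haar1 I) (haar1 J)) ^ 2 := by
  set c : D → D → ℝ := fun I J => β J * ip φ (haar J) * ip (haar1 J) (haar1 I)
  have hpointwise (σ : D → ℝ) : l2normSq (P false true b (Psig σ true false β φ)) =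
      ∑ I ∈ b.support, b I ^ 2 * (∑ J ∈ β.support, c I J * σ J) ^ 2 := by
    rw [l2normSq_P_false]
    refine Finset.sum_congr rfl fun I _ => ?_
    rw [hfun, ip_Psig_true _ _ _ _ (memLp_haar1 I), mul_pow]
    rfl
  simp_rw [hpointwise]
  rw [integral_finsetSum _ fun I _ =>
    (integrable_sq_finset_sum hμ.integrable_eval_mul_eval _ _).const_mul _]
  simp_rw [integral_const_mul, hμ.integral_sq_finset_sum, Finset.mul_sum]
  rw [Finset.sum_comm]
  refine Finset.sum_congr rfl fun J _ => ?_
  rw [Finset.sum_filter_of_ne fun I _ h => ?_]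
  · exact Finset.sum_congr rfl fun I _ => by simp only [c, ip_comm (haar1 J)]; ring
  · by_contra hI
    simp [ip_haar1_of_not_nonempty hI] at h

/-- `𝔼 ‖P^{0,1}_b (P^{σ,1,0}_β φ)‖₂²
= ∑_J ⟨φ, h_J⟩² β_J² ∑_{I ∩ J ≠ ∅} b_I² ⟨h¹_I, h¹_J⟩²`. -/
theorem statement13 (b β : D →₀ ℝ) (μ : Measure (D → ℝ)) (hμ : IsSignMeasure μ)
    (φ : ℝ → ℝ) (hφ : MemLp φ 2 volume) :
    ∫ σ, l2normSq (P false true b (Psig σ true false β φ)) ∂μ =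
      ∑ J ∈ β.support, (ip φ (haar J)) ^ 2 * (β J) ^ 2 *
        ∑ I ∈ b.support.filter (fun I => (ival I ∩ ival J).Nonempty),
          (b I) ^ 2 * (ip (haar1 I) (haar1 J)) ^ 2 :=
  statement13_general b β μ hμ φ

end RandomParaproducts
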